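/- arXiv:math/0405293 — 3 statements merged into one kernel-verified Lean document; each statement's English description precedes it below -/
import Mathlib

section
/- Let (Ω, ℱ, P) be a probability space and let 𝓔 be a convex set of nonnegative (finite-valued) random variables on it that contains at least one strictly positive constant. Let cl 𝓔 denote the closure of 𝓔 with respect to convergence in probability, i.e., the set of all nonnegative random variables g for which there exists a sequence (gₙ) in 𝓔 converging to g in probability. Then for every x > 0, sup_{g ∈ 𝓔} E[U(x g)] = sup_{g ∈ cl 𝓔} E[U(x g)]. -/
open MeasureTheory Filter Set Topology

/-- The positive part of an extended real number, as an element of `ℝ≥0∞`. -/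
noncomputable def erealPos (x : EReal) : ENNReal :=
  if x = ⊤ then ⊤ else ENNReal.ofReal x.toReal

/-- Expectation of an extended-real-valued random variable `ξ`:
`E[ξ⁺] − E[ξ⁻]` when `E[ξ⁻] < ∞`, and `−∞` otherwise. -/
noncomputable def eexp {Ω : Type*} [MeasurableSpace Ω] (P : Measure Ω) (ξ : Ω → EReal) : EReal :=
  if (∫⁻ ω, erealPos (-(ξ ω)) ∂P) = ⊤ then ⊥
  else (∫⁻ ω, erealPos (ξ ω) ∂P).toEReal - (∫⁻ ω, erealPos (-(ξ ω)) ∂P).toEReal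

/-- The utility function `U`, defined on `(0,∞)`, extended to `[0,∞)` by
`U(0) := lim_{x→0+} U(x)` (which equals the infimum since `U` is increasing),
with values in the extended reals. -/
noncomputable def Uext (U : ℝ → ℝ) (x : ℝ) : EReal :=
  if 0 < x then ((U x : ℝ) : EReal) else ⨅ y : {y : ℝ // 0 < y}, ((U (y : ℝ) : ℝ) : EReal)

section helpers

open scoped ENNReal NNReal

lemma erealPos_coe (a : ℝ) : erealPos (a : EReal) = ENNReal.ofReal a := by
  simp [erealPos]

lemma erealPos_bot : erealPos ⊥ = 0 := by simp [erealPos]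

lemma erealPos_mono : Monotone erealPos := by
  intro a b hab
  by_cases ha' : a = ⊥
  · simp [ha', erealPos_bot]
  by_cases hb : b = ⊤
  · simp [erealPos, hb]
  have ha : a ≠ ⊤ := fun h => hb (top_le_iff.1 (h ▸ hab))
  unfold erealPos
  rw [if_neg ha, if_neg hb]
  exact ENNReal.ofReal_le_ofReal (EReal.toReal_le_toReal hab ha' hb)

lemma erealPos_nonpos {z : EReal} (hz : z ≤ 0) : erealPos z = 0 := by
  have h : erealPos z ≤ erealPos ((0:ℝ):EReal) := erealPos_mono (by simpa using hz)
  rw [erealPos_coe] at h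
  simp only [ENNReal.ofReal_zero] at h
  exact le_antisymm h zero_le

lemma measurable_erealPos : Measurable erealPos := by
  unfold erealPos
  exact Measurable.ite (measurableSet_singleton ⊤) measurable_const
    (ENNReal.measurable_ofReal.comp measurable_ereal_toReal)

lemma ennreal_toEReal_eq {A : ℝ≥0∞} (hA : A ≠ ⊤) : (A : EReal) = ((A.toReal : ℝ) : EReal) := by
  have h := EReal.coe_ennreal_ofReal (x := A.toReal)
  rw [ENNReal.ofReal_toReal hA] at h
  rw [h, max_eq_left ENNReal.toReal_nonneg]

lemma ereal_coe_mono : Monotone (fun r : ℝ => (r : EReal)) :=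
  fun _ _ h => EReal.coe_le_coe_iff.2 h

lemma min_div_aux (u s t m : ℝ) (ht : 0 < t) :
    min ((u - s) / t) m = (min u (t * m + s) - s) / t := by
  rcases le_total u (t * m + s) with h | h
  · rw [min_eq_left h, min_eq_left (by rw [div_le_iff₀ ht]; linarith)]
  · rw [min_eq_right h, min_eq_right (by rw [le_div_iff₀ ht]; linarith)]
    field_simp
    ring

lemma iSup_min_natCast (a : ℝ≥0∞) : ⨆ M : ℕ, min a (M : ℝ≥0∞) = a := by
  refine le_antisymm (iSup_le fun _ => min_le_left _ _) ?_
  by_cases ha : a = ⊤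
  · subst ha
    have h : ∀ M : ℕ, min (⊤ : ℝ≥0∞) (M : ℝ≥0∞) = (M : ℝ≥0∞) := fun M => min_eq_right le_top
    simp only [h]
    rw [ENNReal.iSup_natCast]
  · obtain ⟨M, hM⟩ := ENNReal.exists_nat_gt ha
    exact le_iSup_of_le M (le_min le_rfl hM.le)

variable {Ω : Type*} [MeasurableSpace Ω] (P : Measure Ω) [IsProbabilityMeasure P]

lemma lint_ofReal_le (φ : Ω → ℝ) (C : ℝ) (hbd : ∀ ω, φ ω ≤ C) :
    (∫⁻ ω, ENNReal.ofReal (φ ω) ∂P) ≤ ENNReal.ofReal C := by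
  calc (∫⁻ ω, ENNReal.ofReal (φ ω) ∂P) ≤ ∫⁻ _, ENNReal.ofReal C ∂P :=
        lintegral_mono fun ω => ENNReal.ofReal_le_ofReal (hbd ω)
    _ = ENNReal.ofReal C := by simp

lemma eexp_coe_eq (φ : Ω → ℝ) (hφ : Measurable φ) (C : ℝ) (hbd : ∀ ω, |φ ω| ≤ C) :
    eexp P (fun ω => ((φ ω : ℝ) : EReal)) = ((∫ ω, φ ω ∂P : ℝ) : EReal) := by
  have hint : Integrable φ P := by
    refine (integrable_const C).mono' hφ.aestronglyMeasurable (ae_of_all _ ?_)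
    intro ω; simpa [Real.norm_eq_abs] using hbd ω
  have hposA : (∫⁻ ω, erealPos (((φ ω : ℝ) : EReal)) ∂P) = ∫⁻ ω, ENNReal.ofReal (φ ω) ∂P :=
    lintegral_congr fun ω => erealPos_coe _
  have hnegB : (∫⁻ ω, erealPos (-((φ ω : ℝ) : EReal)) ∂P) = ∫⁻ ω, ENNReal.ofReal (-φ ω) ∂P :=
    lintegral_congr fun ω => by rw [← EReal.coe_neg, erealPos_coe]
  have hAne : (∫⁻ ω, ENNReal.ofReal (φ ω) ∂P) ≠ ⊤ :=
    (lt_of_le_of_lt (lint_ofReal_le P φ C fun ω => (abs_le.1 (hbd ω)).2) ENNReal.ofReal_lt_top).ne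
  have hBne : (∫⁻ ω, ENNReal.ofReal (-φ ω) ∂P) ≠ ⊤ :=
    (lt_of_le_of_lt (lint_ofReal_le P _ C fun ω => by have := (abs_le.1 (hbd ω)).1; linarith)
      ENNReal.ofReal_lt_top).ne
  rw [eexp]
  simp only [hposA, hnegB]
  rw [if_neg hBne, ennreal_toEReal_eq hAne, ennreal_toEReal_eq hBne, ← EReal.coe_sub,
    integral_eq_lintegral_pos_part_sub_lintegral_neg_part hint]

lemma le_eexp_of_le (φ : Ω → ℝ) (hφ : Measurable φ) (C : ℝ) (hbd : ∀ ω, |φ ω| ≤ C)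
    (ξ : Ω → EReal) (h : ∀ ω, ((φ ω : ℝ) : EReal) ≤ ξ ω) :
    ((∫ ω, φ ω ∂P : ℝ) : EReal) ≤ eexp P ξ := by
  have hBle : (∫⁻ ω, erealPos (-(ξ ω)) ∂P) ≤ ∫⁻ ω, ENNReal.ofReal (-φ ω) ∂P := by
    refine lintegral_mono fun ω => ?_
    rw [← erealPos_coe, EReal.coe_neg]
    exact erealPos_mono (EReal.neg_le_neg_iff.2 (h ω))
  have hB'ne : (∫⁻ ω, ENNReal.ofReal (-φ ω) ∂P) ≠ ⊤ :=
    (lt_of_le_of_lt (lint_ofReal_le P _ C fun ω => by have := (abs_le.1 (hbd ω)).1; linarith)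
      ENNReal.ofReal_lt_top).ne
  have hBne : (∫⁻ ω, erealPos (-(ξ ω)) ∂P) ≠ ⊤ := (lt_of_le_of_lt hBle hB'ne.lt_top).ne
  have hAle : (∫⁻ ω, ENNReal.ofReal (φ ω) ∂P) ≤ ∫⁻ ω, erealPos (ξ ω) ∂P := by
    refine lintegral_mono fun ω => ?_
    rw [← erealPos_coe]
    exact erealPos_mono (h ω)
  have key := eexp_coe_eq P φ hφ C hbd
  rw [eexp] at key ⊢
  have hposA : (∫⁻ ω, erealPos (((φ ω : ℝ) : EReal)) ∂P) = ∫⁻ ω, ENNReal.ofReal (φ ω) ∂P :=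
    lintegral_congr fun ω => erealPos_coe _
  have hnegB : (∫⁻ ω, erealPos (-((φ ω : ℝ) : EReal)) ∂P) = ∫⁻ ω, ENNReal.ofReal (-φ ω) ∂P :=
    lintegral_congr fun ω => by rw [← EReal.coe_neg, erealPos_coe]
  rw [hposA, hnegB, if_neg hB'ne] at key
  rw [if_neg hBne, ← key]
  exact EReal.sub_le_sub (EReal.coe_ennreal_le_coe_ennreal_iff.2 hAle)
    (EReal.coe_ennreal_le_coe_ennreal_iff.2 hBle)

lemma eexp_le_of_le (φ : Ω → ℝ) (hφ : Measurable φ) (C : ℝ) (hbd : ∀ ω, |φ ω| ≤ C)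
    (ξ : Ω → EReal) (h : ∀ ω, ξ ω ≤ ((φ ω : ℝ) : EReal)) :
    eexp P ξ ≤ ((∫ ω, φ ω ∂P : ℝ) : EReal) := by
  by_cases hBtop : (∫⁻ ω, erealPos (-(ξ ω)) ∂P) = ⊤
  · rw [eexp, if_pos hBtop]; exact bot_le
  have hAle : (∫⁻ ω, erealPos (ξ ω) ∂P) ≤ ∫⁻ ω, ENNReal.ofReal (φ ω) ∂P := by
    refine lintegral_mono fun ω => ?_
    rw [← erealPos_coe]
    exact erealPos_mono (h ω)
  have hBge : (∫⁻ ω, ENNReal.ofReal (-φ ω) ∂P) ≤ ∫⁻ ω, erealPos (-(ξ ω)) ∂P := by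
    refine lintegral_mono fun ω => ?_
    rw [← erealPos_coe, EReal.coe_neg]
    exact erealPos_mono (EReal.neg_le_neg_iff.2 (h ω))
  have hB'ne : (∫⁻ ω, ENNReal.ofReal (-φ ω) ∂P) ≠ ⊤ :=
    (lt_of_le_of_lt (lint_ofReal_le P _ C fun ω => by have := (abs_le.1 (hbd ω)).1; linarith)
      ENNReal.ofReal_lt_top).ne
  have key := eexp_coe_eq P φ hφ C hbd
  rw [eexp] at key
  have hposA : (∫⁻ ω, erealPos (((φ ω : ℝ) : EReal)) ∂P) = ∫⁻ ω, ENNReal.ofReal (φ ω) ∂P :=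
    lintegral_congr fun ω => erealPos_coe _
  have hnegB : (∫⁻ ω, erealPos (-((φ ω : ℝ) : EReal)) ∂P) = ∫⁻ ω, ENNReal.ofReal (-φ ω) ∂P :=
    lintegral_congr fun ω => by rw [← EReal.coe_neg, erealPos_coe]
  rw [hposA, hnegB, if_neg hB'ne] at key
  rw [eexp, if_neg hBtop, ← key]
  exact EReal.sub_le_sub (EReal.coe_ennreal_le_coe_ennreal_iff.2 hAle)
    (EReal.coe_ennreal_le_coe_ennreal_iff.2 hBge)

lemma eexp_le_of_forall_min_le (ξ : Ω → EReal) (hξ : Measurable ξ) (v : EReal)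
    (h : ∀ M : ℕ, eexp P (fun ω => min (ξ ω) ((M : ℕ) : EReal)) ≤ v) :
    eexp P ξ ≤ v := by
  have natnn : ∀ M : ℕ, (0 : EReal) ≤ ((M : ℕ) : EReal) := by
    intro M
    rw [← EReal.coe_coe_eq_natCast]
    exact_mod_cast EReal.coe_le_coe_iff.2 (Nat.cast_nonneg M)
  have negeq : ∀ (M : ℕ) (ω : Ω), erealPos (-(min (ξ ω) ((M : ℕ) : EReal))) =
      erealPos (-(ξ ω)) := by
    intro M ω
    rcases le_total (ξ ω) ((M : ℕ) : EReal) with h' | h'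
    · rw [min_eq_left h']
    · rw [min_eq_right h', erealPos_nonpos (EReal.neg_le.mpr (by simpa using natnn M)),
        erealPos_nonpos (EReal.neg_le.mpr (by simpa using le_trans (natnn M) h'))]
  have negint : ∀ M : ℕ, (∫⁻ ω, erealPos (-(min (ξ ω) ((M : ℕ) : EReal))) ∂P) =
      ∫⁻ ω, erealPos (-(ξ ω)) ∂P := fun M => lintegral_congr (negeq M)
  set B := ∫⁻ ω, erealPos (-(ξ ω)) ∂P with hBdef
  by_cases hB : B = ⊤
  · rw [eexp, if_pos hB]; exact bot_le
  have poseq : ∀ (M : ℕ) (ω : Ω), erealPos (min (ξ ω) ((M : ℕ) : EReal)) =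
      min (erealPos (ξ ω)) ((M : ℕ) : ℝ≥0∞) := by
    intro M ω
    rw [erealPos_mono.map_min]
    congr 1
    rw [← EReal.coe_coe_eq_natCast, erealPos_coe, ENNReal.ofReal_natCast]
  have posint : ∀ M : ℕ, (∫⁻ ω, erealPos (min (ξ ω) ((M : ℕ) : EReal)) ∂P) =
      ∫⁻ ω, min (erealPos (ξ ω)) ((M : ℕ) : ℝ≥0∞) ∂P := fun M => lintegral_congr (poseq M)
  set A : ℕ → ℝ≥0∞ := fun M => ∫⁻ ω, min (erealPos (ξ ω)) ((M : ℕ) : ℝ≥0∞) ∂P with hAdef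
  have hAne : ∀ M, A M ≠ ⊤ := by
    intro M
    have hle : A M ≤ (M : ℝ≥0∞) := by
      calc A M ≤ ∫⁻ _, ((M : ℕ) : ℝ≥0∞) ∂P := lintegral_mono fun ω => min_le_right _ _
        _ = (M : ℝ≥0∞) := by simp
    exact (lt_of_le_of_lt hle (ENNReal.natCast_lt_top M)).ne
  have hAsup : (∫⁻ ω, erealPos (ξ ω) ∂P) = ⨆ M : ℕ, A M := by
    rw [hAdef, ← lintegral_iSup]
    · exact lintegral_congr fun ω => (iSup_min_natCast _).symm
    · exact fun M => (measurable_erealPos.comp hξ).min measurable_const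
    · intro i j hij ω
      exact min_le_min le_rfl (by exact_mod_cast Nat.cast_le.2 hij)
  have hM : ∀ M : ℕ, ((A M : ℝ≥0∞) : EReal) - (B : EReal) ≤ v := by
    intro M
    have hh := h M
    rwa [eexp, negint M, if_neg hB, posint M] at hh
  have hv_ne_bot : v ≠ ⊥ := by
    intro hv
    have h0 := hM 0
    rw [hv, le_bot_iff, ennreal_toEReal_eq (hAne 0), ennreal_toEReal_eq hB,
      ← EReal.coe_sub] at h0
    exact EReal.coe_ne_bot _ h0
  by_cases hv_top : v = ⊤
  · rw [hv_top]; exact le_top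
  have hMreal : ∀ M : ℕ, (A M).toReal ≤ v.toReal + B.toReal := by
    intro M
    have hh := hM M
    rw [ennreal_toEReal_eq (hAne M), ennreal_toEReal_eq hB, ← EReal.coe_sub,
      ← EReal.coe_toReal hv_top hv_ne_bot, EReal.coe_le_coe_iff] at hh
    linarith
  have hc_nonneg : (0 : ℝ) ≤ v.toReal + B.toReal := le_trans ENNReal.toReal_nonneg (hMreal 0)
  have hAle : ∀ M, A M ≤ ENNReal.ofReal (v.toReal + B.toReal) := by
    intro M
    rw [← ENNReal.ofReal_toReal (hAne M)]
    exact ENNReal.ofReal_le_ofReal (hMreal M)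
  have hAtot : (∫⁻ ω, erealPos (ξ ω) ∂P) ≤ ENNReal.ofReal (v.toReal + B.toReal) := by
    rw [hAsup]; exact iSup_le hAle
  have hAnetop : (∫⁻ ω, erealPos (ξ ω) ∂P) ≠ ⊤ :=
    (lt_of_le_of_lt hAtot ENNReal.ofReal_lt_top).ne
  have hAreal : (∫⁻ ω, erealPos (ξ ω) ∂P).toReal ≤ v.toReal + B.toReal := by
    calc (∫⁻ ω, erealPos (ξ ω) ∂P).toReal ≤ (ENNReal.ofReal (v.toReal + B.toReal)).toReal :=
          ENNReal.toReal_mono ENNReal.ofReal_ne_top hAtot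
      _ = v.toReal + B.toReal := ENNReal.toReal_ofReal hc_nonneg
  rw [eexp, ← hBdef, if_neg hB, ennreal_toEReal_eq hAnetop, ennreal_toEReal_eq hB,
    ← EReal.coe_sub, ← EReal.coe_toReal hv_top hv_ne_bot, EReal.coe_le_coe_iff]
  linarith

end helpers

theorem stmt_0
    {Ω : Type*} [MeasurableSpace Ω] (P : Measure Ω) [IsProbabilityMeasure P]
    (U U' : ℝ → ℝ)
    (hU_concave : StrictConcaveOn ℝ (Ioi 0) U)
    (hU_mono : StrictMonoOn U (Ioi 0))
    (hU_deriv : ∀ x ∈ Ioi (0 : ℝ), HasDerivAt U (U' x) x)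
    (hU'_cont : ContinuousOn U' (Ioi 0))
    (hInada_zero : Tendsto U' (𝓝[>] 0) atTop)
    (hInada_infty : Tendsto U' atTop (𝓝 0))
    (E : Set (Ω → ℝ))
    (hE_meas : ∀ g ∈ E, Measurable g)
    (hE_nonneg : ∀ g ∈ E, ∀ ω, 0 ≤ g ω)
    (hE_convex : ∀ g₁ ∈ E, ∀ g₂ ∈ E, ∀ t : ℝ, 0 ≤ t → t ≤ 1 →
      (fun ω => t * g₁ ω + (1 - t) * g₂ ω) ∈ E)
    (hE_const : ∃ c : ℝ, 0 < c ∧ (fun _ => c) ∈ E) :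
    ∀ x > (0 : ℝ),
      (⨆ g ∈ E, eexp P (fun ω => Uext U (x * g ω))) =
        ⨆ g ∈ {g : Ω → ℝ | Measurable g ∧ (∀ ω, 0 ≤ g ω) ∧
            ∃ gs : ℕ → Ω → ℝ, (∀ n, gs n ∈ E) ∧ TendstoInMeasure P gs atTop g},
          eexp P (fun ω => Uext U (x * g ω)) := by
  obtain ⟨c, hc, hcE⟩ := hE_const
  intro x hx
  have hUcont : ContinuousOn U (Ioi 0) :=
    fun y hy => (hU_deriv y hy).continuousAt.continuousWithinAt
  have hUmono : MonotoneOn U (Ioi 0) := hU_mono.monotoneOn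
  have hconc := hU_concave.concaveOn
  set U0 : EReal := ⨅ y : {y : ℝ // 0 < y}, ((U (y : ℝ) : ℝ) : EReal) with hU0def
  have hUext_pos : ∀ z : ℝ, 0 < z → Uext U z = ((U z : ℝ) : EReal) := fun z hz => if_pos hz
  have hUext_zero : Uext U 0 = U0 := if_neg (lt_irrefl 0)
  have hU0le : ∀ y : ℝ, 0 < y → U0 ≤ ((U y : ℝ) : EReal) := fun y hy => iInf_le (fun y : {y : ℝ // 0 < y} => ((U (y : ℝ) : ℝ) : EReal)) ⟨y, hy⟩
  set r : ℝ := U (x * c) with hrdef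
  have hxc : 0 < x * c := mul_pos hx hc
  have hFc : eexp P (fun _ : Ω => Uext U (x * c)) = (r : EReal) := by
    have h1 : (fun _ : Ω => Uext U (x * c)) = fun _ : Ω => ((r : ℝ) : EReal) := by
      funext ω; rw [hUext_pos _ hxc]
    rw [h1, eexp_coe_eq P (fun _ => r) measurable_const |r| (fun _ => le_refl _)]
    simp
  have hrV : (r : EReal) ≤ ⨆ g ∈ E, eexp P (fun ω => Uext U (x * g ω)) := by
    rw [← hFc]
    exact le_biSup (fun g => eexp P fun ω => Uext U (x * g ω)) hcE
  refine le_antisymm ?_ ?_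
  · refine biSup_mono fun g hg => ⟨hE_meas g hg, hE_nonneg g hg, fun _ => g, fun _ => hg,
      tendstoInMeasure_of_tendsto_ae (fun _ => (hE_meas g hg).aestronglyMeasurable)
        (ae_of_all _ fun ω => tendsto_const_nhds)⟩
  · refine iSup₂_le fun g hg => ?_
    obtain ⟨hgmeas, hgnn, gs, hgsE, hgsconv⟩ := hg
    by_cases hVtop : (⨆ g ∈ E, eexp P (fun ω => Uext U (x * g ω))) = ⊤
    · rw [hVtop]; exact le_top
    obtain ⟨V', hV⟩ : ∃ v : ℝ,
        (⨆ g ∈ E, eexp P (fun ω => Uext U (x * g ω))) = ((v : ℝ) : EReal) := by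
      refine ⟨_, (EReal.coe_toReal hVtop ?_).symm⟩
      intro h
      rw [h, le_bot_iff] at hrV
      exact EReal.coe_ne_bot _ hrV
    have hrV' : r ≤ V' := by
      rw [hV] at hrV; exact_mod_cast hrV
    obtain ⟨ns, hns, hae⟩ := hgsconv.exists_seq_tendsto_ae
    have hkey_real : ∀ ε : ℝ, 0 < ε → ε < 1 → ∀ a : ℝ, 0 < a →
        (1 - ε) * U (x * a) + ε * r ≤ U (x * ((1 - ε) * a + ε * c)) := by
      intro ε hε hε1 a ha
      have h1 : x * a ∈ Ioi (0:ℝ) := mul_pos hx ha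
      have h2 : x * c ∈ Ioi (0:ℝ) := hxc
      have h3 := hconc.2 h1 h2 (by linarith : (0:ℝ) ≤ 1 - ε) hε.le (by ring)
      have h4 : (1 - ε) • (x * a) + ε • (x * c) = x * ((1 - ε) * a + ε * c) := by
        simp only [smul_eq_mul]; ring
      rw [h4] at h3
      simpa [smul_eq_mul, ← hrdef] using h3
    have hU0_real : ∀ u0 : ℝ, U0 = ((u0 : ℝ) : EReal) → ∀ ε : ℝ, 0 < ε → ε < 1 →
        (1 - ε) * u0 + ε * r ≤ U (x * (ε * c)) := by
      intro u0 hu0 ε hε hε1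
      have hxεc : 0 < x * (ε * c) := mul_pos hx (mul_pos hε hc)
      have h0 : Tendsto (fun n : ℕ => (1 : ℝ) / (n + 1)) atTop (𝓝 0) :=
        tendsto_one_div_add_atTop_nhds_zero_nat
      have hin : Tendsto (fun n : ℕ => x * ((1 - ε) * (1 / (n + 1)) + ε * c)) atTop
          (𝓝 (x * ((1 - ε) * 0 + ε * c))) :=
        ((h0.const_mul (1 - ε)).add_const (ε * c)).const_mul x
      have hin' : Tendsto (fun n : ℕ => x * ((1 - ε) * (1 / (n + 1)) + ε * c)) atTop
          (𝓝 (x * (ε * c))) := by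
        convert hin using 2; ring
      have hlim : Tendsto (fun n : ℕ => U (x * ((1 - ε) * (1 / (n + 1)) + ε * c))) atTop
          (𝓝 (U (x * (ε * c)))) :=
        ((hU_deriv _ hxεc).continuousAt.tendsto.comp hin')
      refine ge_of_tendsto' hlim fun n => ?_
      have hδ : 0 < (1:ℝ) / (n + 1) := by positivity
      have h5 := hkey_real ε hε hε1 (1 / (n+1)) hδ
      have h6 : u0 ≤ U (x * (1 / (n+1))) := by
        have h7 := hU0le _ (mul_pos hx hδ)
        rw [hu0] at h7; exact_mod_cast h7
      have h8 := mul_le_mul_of_nonneg_left h6 (by linarith : (0:ℝ) ≤ 1 - ε)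
      linarith
    have hkey : ∀ ε : ℝ, 0 < ε → ε < 1 → ∀ a : ℝ, 0 ≤ a →
        Uext U (x * a) ≤ (((U (x * ((1 - ε) * a + ε * c)) - ε * r) / (1 - ε) : ℝ) : EReal) := by
      intro ε hε hε1 a ha
      have h1ε : (0:ℝ) < 1 - ε := by linarith
      rcases ha.lt_or_eq with hpos | hzero
      · rw [hUext_pos _ (mul_pos hx hpos), EReal.coe_le_coe_iff, le_div_iff₀ h1ε]
        have h5 := hkey_real ε hε hε1 a hpos
        linarith
      · have hxa : x * a = 0 := by rw [← hzero, mul_zero]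
        have harg : (1 - ε) * a + ε * c = ε * c := by rw [← hzero]; ring
        rw [hxa, hUext_zero, harg]
        by_cases hbot : U0 = ⊥
        · rw [hbot]; exact bot_le
        · have htop : U0 ≠ ⊤ := by
            intro h
            have h7 := hU0le 1 one_pos
            rw [h, top_le_iff] at h7
            exact EReal.coe_ne_top _ h7
          have hu0 : U0 = ((U0.toReal : ℝ) : EReal) := (EReal.coe_toReal htop hbot).symm
          rw [hu0, EReal.coe_le_coe_iff, le_div_iff₀ h1ε]
          have h9 := hU0_real U0.toReal hu0 ε hε hε1
          linarith
    have stepA : ∀ ε : ℝ, 0 < ε → ε < 1 → ∀ K : ℝ,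
        ∫ ω, min (U (x * ((1 - ε) * g ω + ε * c))) K ∂P ≤ V' := by
      intro ε hε hε1 K
      have hεc : 0 < ε * c := mul_pos hε hc
      set L : ℝ := U (x * (ε * c)) with hLdef
      set C : ℝ := max |K| |L| with hCdef
      have hmem : ∀ n : ℕ, (fun ω => (1 - ε) * gs (ns n) ω + ε * c) ∈ E := by
        intro n
        have h1 := hE_convex (gs (ns n)) (hgsE (ns n)) (fun _ => c) hcE (1 - ε)
          (by linarith) (by linarith)
        have h2 : (fun ω => (1 - ε) * gs (ns n) ω + ε * c)
            = fun ω => (1 - ε) * gs (ns n) ω + (1 - (1 - ε)) * c := by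
          funext ω; ring_nf
        rw [h2]; exact h1
      have hUlb : ∀ (h : Ω → ℝ), (∀ ω, 0 ≤ h ω) → ∀ ω,
          L ≤ U (x * ((1 - ε) * h ω + ε * c)) := by
        intro h hnn ω
        refine hUmono (mem_Ioi.2 (mul_pos hx hεc))
          (mem_Ioi.2 (mul_pos hx (by nlinarith [hnn ω]))) ?_
        exact mul_le_mul_of_nonneg_left (by nlinarith [hnn ω]) hx.le
      have habs : ∀ u : ℝ, L ≤ u → |min u K| ≤ C := by
        intro u hu
        rw [abs_le]
        constructor
        · have hL1 : -C ≤ u := by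
            have h1 := neg_abs_le L
            have h2 := le_max_right |K| |L|
            linarith
          have hK1 : -C ≤ K := by
            have h1 := neg_abs_le K
            have h2 := le_max_left |K| |L|
            linarith
          exact le_min hL1 hK1
        · exact le_trans (min_le_right _ _) (le_trans (le_abs_self K) (le_max_left _ _))
      have hbd : ∀ (n : ℕ) ω, |min (U (x * ((1 - ε) * gs (ns n) ω + ε * c))) K| ≤ C :=
        fun n ω => habs _ (hUlb (gs (ns n)) (hE_nonneg _ (hgsE (ns n))) ω)
      have hGcont : Continuous fun y : ℝ => min (U (x * max y (ε * c))) K := by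
        have h1 : Continuous fun y : ℝ => x * max y (ε * c) :=
          continuous_const.mul (continuous_id.max continuous_const)
        have h2 : Continuous fun y : ℝ => U (x * max y (ε * c)) :=
          hUcont.comp_continuous h1 fun y => mem_Ioi.2
            (mul_pos hx (lt_of_lt_of_le hεc (le_max_right _ _)))
        exact h2.min continuous_const
      have hFmeas : ∀ n : ℕ,
          Measurable fun ω => min (U (x * ((1 - ε) * gs (ns n) ω + ε * c))) K := by
        intro n
        have hcomp : (fun ω => min (U (x * ((1 - ε) * gs (ns n) ω + ε * c))) K)
            = (fun y : ℝ => min (U (x * max y (ε * c))) K)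
              ∘ (fun ω => (1 - ε) * gs (ns n) ω + ε * c) := by
          funext ω
          simp only [Function.comp_apply]
          rw [max_eq_left (by nlinarith [hE_nonneg _ (hgsE (ns n)) ω] :
            ε * c ≤ (1 - ε) * gs (ns n) ω + ε * c)]
        rw [hcomp]
        exact hGcont.measurable.comp (hE_meas _ (hmem n))
      have hlim : ∀ᵐ ω ∂P, Tendsto (fun n => min (U (x * ((1 - ε) * gs (ns n) ω + ε * c))) K)
          atTop (𝓝 (min (U (x * ((1 - ε) * g ω + ε * c))) K)) := by
        filter_upwards [hae] with ω hω
        have h1 : Tendsto (fun n => x * ((1 - ε) * gs (ns n) ω + ε * c)) atTop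
            (𝓝 (x * ((1 - ε) * g ω + ε * c))) :=
          ((hω.const_mul (1 - ε)).add_const (ε * c)).const_mul x
        have hpos : 0 < x * ((1 - ε) * g ω + ε * c) := mul_pos hx (by nlinarith [hgnn ω])
        exact ((hU_deriv _ hpos).continuousAt.tendsto.comp h1).min tendsto_const_nhds
      have hdct := tendsto_integral_of_dominated_convergence (μ := P) (fun _ => C)
        (fun n => (hFmeas n).aestronglyMeasurable) (integrable_const C)
        (fun n => ae_of_all _ fun ω => by simpa [Real.norm_eq_abs] using hbd n ω) hlim
      refine le_of_tendsto hdct (Eventually.of_forall fun n => ?_)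
      have hle1 : ((∫ ω, min (U (x * ((1 - ε) * gs (ns n) ω + ε * c))) K ∂P : ℝ) : EReal)
          ≤ eexp P (fun ω => Uext U (x * ((1 - ε) * gs (ns n) ω + ε * c))) := by
        refine le_eexp_of_le P _ (hFmeas n) C (hbd n) _ fun ω => ?_
        rw [hUext_pos _ (mul_pos hx (by nlinarith [hE_nonneg _ (hgsE (ns n)) ω]))]
        exact EReal.coe_le_coe_iff.2 (min_le_left _ _)
      have hle2 : eexp P (fun ω => Uext U (x * ((1 - ε) * gs (ns n) ω + ε * c)))
          ≤ ⨆ g ∈ E, eexp P (fun ω => Uext U (x * g ω)) :=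
        le_biSup (fun g => eexp P fun ω => Uext U (x * g ω)) (hmem n)
      have h3 := le_trans hle1 hle2
      rw [hV] at h3
      exact_mod_cast h3
    have hξmeas : Measurable fun ω => Uext U (x * g ω) := by
      set Fm : ℕ → Ω → EReal :=
        fun n ω => ((U (x * max (g ω) (1 / (n + 1))) : ℝ) : EReal) with hFmdef
      have hFmmeas : ∀ n, Measurable (Fm n) := by
        intro n
        have hδ : 0 < (1:ℝ) / (n + 1) := by positivity
        have h1 : Continuous fun y : ℝ => U (x * max y (1 / (n + 1))) :=
          hUcont.comp_continuous (continuous_const.mul (continuous_id.max continuous_const))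
            fun y => mem_Ioi.2 (mul_pos hx (lt_of_lt_of_le hδ (le_max_right _ _)))
        exact measurable_coe_real_ereal.comp (h1.measurable.comp hgmeas)
      have hFmlim : ∀ ω, Tendsto (fun n => Fm n ω) atTop (𝓝 (Uext U (x * g ω))) := by
        intro ω
        rcases (hgnn ω).lt_or_eq with hpos | hzero
        · have hev : (fun n => Fm n ω) =ᶠ[atTop] fun _ => Uext U (x * g ω) := by
            obtain ⟨N, hN⟩ := exists_nat_one_div_lt hpos
            filter_upwards [eventually_ge_atTop N] with n hn
            have h1 : (1:ℝ) / (n + 1) ≤ 1 / (N + 1) := by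
              apply one_div_le_one_div_of_le (by positivity)
              have : (N:ℝ) ≤ n := by exact_mod_cast hn
              linarith
            have h2 : max (g ω) (1 / (n + 1) : ℝ) = g ω := max_eq_left (le_trans h1 hN.le)
            show ((U (x * max (g ω) (1 / (n + 1))) : ℝ) : EReal) = Uext U (x * g ω)
            rw [h2, hUext_pos _ (mul_pos hx hpos)]
          exact Tendsto.congr' hev.symm tendsto_const_nhds
        · have hmax : ∀ n : ℕ, max (g ω) (1 / (n + 1) : ℝ) = 1 / (n + 1) := fun n =>
            max_eq_right (by rw [← hzero]; positivity)
          have hxg : x * g ω = 0 := by rw [← hzero, mul_zero]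
          rw [hxg, hUext_zero]
          have hanti : Antitone fun n : ℕ => Fm n ω := by
            intro m n hmn
            show ((U (x * max (g ω) (1 / (n + 1))) : ℝ) : EReal)
              ≤ ((U (x * max (g ω) (1 / (m + 1))) : ℝ) : EReal)
            rw [hmax m, hmax n]
            apply EReal.coe_le_coe_iff.2
            apply hUmono (mem_Ioi.2 (mul_pos hx (by positivity)))
              (mem_Ioi.2 (mul_pos hx (by positivity)))
            have h1 : (1:ℝ) / (n + 1) ≤ 1 / (m + 1) := by
              apply one_div_le_one_div_of_le (by positivity)
              have : (m:ℝ) ≤ n := by exact_mod_cast hmn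
              linarith
            exact mul_le_mul_of_nonneg_left h1 hx.le
          have htd := tendsto_atTop_iInf hanti
          have hinf : (⨅ n : ℕ, Fm n ω) = U0 := by
            refine le_antisymm ?_ (le_iInf fun n => ?_)
            · rw [hU0def]
              refine le_iInf fun yp => ?_
              obtain ⟨y, hy⟩ := yp
              obtain ⟨N, hN⟩ := exists_nat_one_div_lt (div_pos hy hx)
              refine iInf_le_of_le N ?_
              show ((U (x * max (g ω) (1 / (N + 1))) : ℝ) : EReal) ≤ ((U y : ℝ) : EReal)
              rw [hmax N]
              apply EReal.coe_le_coe_iff.2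
              apply hUmono (mem_Ioi.2 (mul_pos hx (by positivity))) (mem_Ioi.2 hy)
              have h1 : (1:ℝ) / (N + 1) * x < y := (lt_div_iff₀ hx).1 hN
              nlinarith
            · show U0 ≤ ((U (x * max (g ω) (1 / (n + 1))) : ℝ) : EReal)
              rw [hmax n]
              exact hU0le _ (mul_pos hx (by positivity))
          rw [← hinf]
          exact htd
      have heq : (fun ω => Uext U (x * g ω)) = fun ω => liminf (fun n => Fm n ω) atTop :=
        funext fun ω => ((hFmlim ω).liminf_eq).symm
      rw [heq]
      exact Measurable.liminf hFmmeas
    rw [hV]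
    refine eexp_le_of_forall_min_le P _ hξmeas ((V' : ℝ) : EReal) ?_
    intro M
    have hεbound : ∀ ε : ℝ, 0 < ε → ε < 1 →
        eexp P (fun ω => min (Uext U (x * g ω)) ((M : ℕ) : EReal)) ≤
          (((V' - ε * r) / (1 - ε) : ℝ) : EReal) := by
      intro ε hε hε1
      have h1ε : (0:ℝ) < 1 - ε := by linarith
      have hεc : 0 < ε * c := mul_pos hε hc
      set K : ℝ := (1 - ε) * M + ε * r with hKdef
      set L : ℝ := U (x * (ε * c)) with hLdef
      have hUlbg : ∀ ω, L ≤ U (x * ((1 - ε) * g ω + ε * c)) := by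
        intro ω
        refine hUmono (mem_Ioi.2 (mul_pos hx hεc))
          (mem_Ioi.2 (mul_pos hx (by nlinarith [hgnn ω]))) ?_
        exact mul_le_mul_of_nonneg_left (by nlinarith [hgnn ω]) hx.le
      set ψ : Ω → ℝ :=
        fun ω => min ((U (x * ((1 - ε) * g ω + ε * c)) - ε * r) / (1 - ε)) M with hψdef
      set Cb : ℝ := max |(M:ℝ)| |(L - ε * r) / (1 - ε)| with hCbdef
      have hψbd : ∀ ω, |ψ ω| ≤ Cb := by
        intro ω
        have h2 : (L - ε * r) / (1 - ε) ≤ (U (x * ((1 - ε) * g ω + ε * c)) - ε * r) / (1 - ε) :=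
          (div_le_div_iff_of_pos_right h1ε).2 (by linarith [hUlbg ω])
        rw [abs_le]
        constructor
        · have hL1 : -Cb ≤ (L - ε * r) / (1 - ε) := by
            have ha1 := neg_abs_le ((L - ε * r) / (1 - ε))
            have ha2 := le_max_right |(M:ℝ)| |(L - ε * r) / (1 - ε)|
            linarith
          have hM1 : -Cb ≤ (M:ℝ) := by
            have ha1 := neg_abs_le (M:ℝ)
            have ha2 := le_max_left |(M:ℝ)| |(L - ε * r) / (1 - ε)|
            linarith
          exact le_min (le_trans hL1 h2) hM1
        · exact le_trans (min_le_right _ _) (le_trans (le_abs_self _) (le_max_left _ _))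
      have hψmeas : Measurable ψ := by
        have h1 : Continuous fun y : ℝ =>
            min ((U (x * max y (ε * c)) - ε * r) / (1 - ε)) (M:ℝ) := by
          have h2 : Continuous fun y : ℝ => U (x * max y (ε * c)) :=
            hUcont.comp_continuous
              (continuous_const.mul (continuous_id.max continuous_const))
              fun y => mem_Ioi.2 (mul_pos hx (lt_of_lt_of_le hεc (le_max_right _ _)))
          exact (((h2.sub continuous_const).div_const _).min continuous_const)
        have hcomp : ψ = (fun y : ℝ => min ((U (x * max y (ε * c)) - ε * r) / (1 - ε)) (M:ℝ))
            ∘ (fun ω => (1 - ε) * g ω + ε * c) := by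
          funext ω
          simp only [Function.comp_apply, hψdef]
          rw [max_eq_left (by nlinarith [hgnn ω] : ε * c ≤ (1 - ε) * g ω + ε * c)]
        rw [hcomp]
        exact h1.measurable.comp ((hgmeas.const_mul _).add_const _)
      have hchain : eexp P (fun ω => min (Uext U (x * g ω)) ((M : ℕ) : EReal))
          ≤ ((∫ ω, ψ ω ∂P : ℝ) : EReal) := by
        refine eexp_le_of_le P ψ hψmeas Cb hψbd _ fun ω => ?_
        have h3 := hkey ε hε hε1 (g ω) (hgnn ω)
        calc min (Uext U (x * g ω)) ((M : ℕ) : EReal)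
            ≤ min ((((U (x * ((1 - ε) * g ω + ε * c)) - ε * r) / (1 - ε) : ℝ)) : EReal)
              (((M : ℝ) : ℝ) : EReal) := by
              rw [← EReal.coe_coe_eq_natCast]
              exact min_le_min h3 le_rfl
          _ = ((ψ ω : ℝ) : EReal) := by
              rw [hψdef]
              exact (ereal_coe_mono.map_min).symm
      have hintmin : Integrable (fun ω => min (U (x * ((1 - ε) * g ω + ε * c))) K) P := by
        have hmeasmin : Measurable fun ω => min (U (x * ((1 - ε) * g ω + ε * c))) K := by
          have h1 : Continuous fun y : ℝ => min (U (x * max y (ε * c))) K := by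
            have h2 : Continuous fun y : ℝ => U (x * max y (ε * c)) :=
              hUcont.comp_continuous
                (continuous_const.mul (continuous_id.max continuous_const))
                fun y => mem_Ioi.2 (mul_pos hx (lt_of_lt_of_le hεc (le_max_right _ _)))
            exact h2.min continuous_const
          have hcomp : (fun ω => min (U (x * ((1 - ε) * g ω + ε * c))) K)
              = (fun y : ℝ => min (U (x * max y (ε * c))) K)
                ∘ (fun ω => (1 - ε) * g ω + ε * c) := by
            funext ω
            simp only [Function.comp_apply]
            rw [max_eq_left (by nlinarith [hgnn ω] : ε * c ≤ (1 - ε) * g ω + ε * c)]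
          rw [hcomp]
          exact h1.measurable.comp ((hgmeas.const_mul _).add_const _)
        refine (integrable_const (max |K| |L|)).mono' hmeasmin.aestronglyMeasurable
          (ae_of_all _ fun ω => ?_)
        rw [Real.norm_eq_abs, abs_le]
        constructor
        · have hL1 : -(max |K| |L|) ≤ L := by
            have ha1 := neg_abs_le L
            have ha2 := le_max_right |K| |L|
            linarith
          have hK1 : -(max |K| |L|) ≤ K := by
            have ha1 := neg_abs_le K
            have ha2 := le_max_left |K| |L|
            linarith
          exact le_min (le_trans hL1 (hUlbg ω)) hK1
        · exact le_trans (min_le_right _ _) (le_trans (le_abs_self K) (le_max_left _ _))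
      have hψeq : ψ = fun ω => (min (U (x * ((1 - ε) * g ω + ε * c))) K - ε * r) / (1 - ε) := by
        funext ω
        rw [hψdef]
        simp only []
        rw [min_div_aux _ _ _ _ h1ε, hKdef]
      have hψint : ∫ ω, ψ ω ∂P
          = ((∫ ω, min (U (x * ((1 - ε) * g ω + ε * c))) K ∂P) - ε * r) / (1 - ε) := by
        rw [hψeq]
        rw [integral_div, integral_sub hintmin (integrable_const _), integral_const]
        simp
      have hfinal : ∫ ω, ψ ω ∂P ≤ (V' - ε * r) / (1 - ε) := by
        rw [hψint]
        have := stepA ε hε hε1 K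
        exact (div_le_div_iff_of_pos_right h1ε).2 (by linarith)
      exact le_trans hchain (EReal.coe_le_coe_iff.2 hfinal)
    have hεseq : Tendsto (fun n : ℕ => (1:ℝ) / (n + 2)) atTop (𝓝 0) := by
      have h1 : Tendsto (fun n : ℕ => ((n:ℝ) + 2)) atTop atTop :=
        tendsto_atTop_add_const_right _ 2 tendsto_natCast_atTop_atTop
      simp only [one_div]; exact h1.inv_tendsto_atTop
    have hβ : Tendsto (fun n : ℕ => (V' - (1 / (n + 2)) * r) / (1 - 1 / (n + 2))) atTop
        (𝓝 V') := by
      have h2 : Tendsto (fun n : ℕ => (V' - (1 / (n + 2)) * r) / (1 - 1 / (n + 2))) atTop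
          (𝓝 ((V' - 0 * r) / (1 - 0))) :=
        (tendsto_const_nhds.sub (hεseq.mul tendsto_const_nhds)).div
          (tendsto_const_nhds.sub hεseq) (by norm_num)
      simpa using h2
    refine ge_of_tendsto (EReal.tendsto_coe.2 hβ) (Eventually.of_forall fun n => ?_)
    refine hεbound (1 / (n + 2)) (by positivity) ?_
    rw [div_lt_one (by positivity)]
    have : (0:ℝ) ≤ n := Nat.cast_nonneg n
    linarith
end

section
/- Let K ⊆ ℝ × ℝ^N be open and convex, and let u : K → ℝ be concave and strictly increasing in its first argument (i.e., u(x,q) < u(x',q) whenever x < x' and both (x,q), (x',q) ∈ K). If p̃ ∈ ℝ^N is a utility-based price for u at a point (x,q) ∈ K, then there exists y > 0 such that (y, y p̃) is a supergradient of u at (x,q). -/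
open Finset

theorem stmt_7
    {N : ℕ} (K : Set (ℝ × (Fin N → ℝ)))
    (hK_open : IsOpen K) (hK_convex : Convex ℝ K)
    (u : ℝ × (Fin N → ℝ) → ℝ)
    (hu_concave : ConcaveOn ℝ K u)
    -- `u` is strictly increasing in its first argument:
    (hu_mono : ∀ x x' : ℝ, ∀ q : Fin N → ℝ,
      (x, q) ∈ K → (x', q) ∈ K → x < x' → u (x, q) < u (x', q))
    (x : ℝ) (q : Fin N → ℝ) (hxq : (x, q) ∈ K)
    -- `p` is a utility-based price for `u` at `(x, q)`:
    (p : Fin N → ℝ)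
    (hp : ∀ p' ∈ K, p'.1 + ∑ i, p'.2 i * p i = x + ∑ i, q i * p i → u p' ≤ u (x, q)) :
    -- then for some `y > 0`, `(y, y p)` is a supergradient of `u` at `(x, q)`:
    ∃ y > (0 : ℝ), ∀ p' ∈ K,
      u p' ≤ u (x, q) + y * (p'.1 - x) + ∑ i, (y * p i) * (p'.2 i - q i) := by
  classical
  set g0 := u (x, q) with hg0
  set c : ℝ := x + ∑ i, q i * p i with hc
  have hucont : ContinuousOn u K := hu_concave.continuousOn hK_open
  -- the "shadow" of the strict hypograph in ℝ²
  set A : Set (ℝ × ℝ) :=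
    {w | ∃ z, z ∈ K ∧ z.1 + ∑ i, z.2 i * p i = c + w.1 ∧ w.2 < u z} with hA
  have hAopen : IsOpen A := by
    rw [isOpen_iff_mem_nhds]
    rintro w ⟨z, hzK, hzφ, hzu⟩
    have hm : Continuous fun w' : ℝ × ℝ =>
        ((z.1 + (w'.1 - w.1), z.2) : ℝ × (Fin N → ℝ)) := by fun_prop
    have huz : ContinuousAt u z := hucont.continuousAt (hK_open.mem_nhds hzK)
    have h1 : ∀ᶠ w' in nhds w,
        ((z.1 + (w'.1 - w.1), z.2) : ℝ × (Fin N → ℝ)) ∈ K := by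
      have hK' : K ∈ nhds ((z.1 + (w.1 - w.1), z.2) : ℝ × (Fin N → ℝ)) := by
        simpa using hK_open.mem_nhds hzK
      exact hm.continuousAt.eventually_mem hK'
    have hcomp : ContinuousAt (fun w' : ℝ × ℝ => u (z.1 + (w'.1 - w.1), z.2)) w := by
      refine ContinuousAt.comp ?_ hm.continuousAt
      simpa using huz
    have h2 : ∀ᶠ w' in nhds w, w'.2 < u (z.1 + (w'.1 - w.1), z.2) := by
      refine continuous_snd.continuousAt.eventually_lt hcomp ?_
      simpa using hzu
    filter_upwards [h1, h2] with w' hw1 hw2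
    refine ⟨(z.1 + (w'.1 - w.1), z.2), hw1, ?_, hw2⟩
    simp only
    linarith [hzφ]
  have hAconv : Convex ℝ A := by
    rintro w₁ ⟨z₁, hz₁K, hz₁φ, hz₁u⟩ w₂ ⟨z₂, hz₂K, hz₂φ, hz₂u⟩ a b ha hb hab
    refine ⟨a • z₁ + b • z₂, hK_convex hz₁K hz₂K ha hb hab, ?_, ?_⟩
    · have hS : ∑ i, (a * z₁.2 i + b * z₂.2 i) * p i
          = a * ∑ i, z₁.2 i * p i + b * ∑ i, z₂.2 i * p i := by
        rw [Finset.mul_sum, Finset.mul_sum, ← Finset.sum_add_distrib]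
        exact Finset.sum_congr rfl fun i _ => by ring
      simp only [Prod.fst_add, Prod.smul_fst, Prod.snd_add, Prod.smul_snd,
        Pi.add_apply, Pi.smul_apply, smul_eq_mul] at hS ⊢
      rw [hS]
      have e1 : a * (z₁.1 + ∑ i, z₁.2 i * p i) = a * (c + w₁.1) := by rw [hz₁φ]
      have e2 : b * (z₂.1 + ∑ i, z₂.2 i * p i) = b * (c + w₂.1) := by rw [hz₂φ]
      linear_combination e1 + e2 + c * hab
    · have hcc := hu_concave.2 hz₁K hz₂K ha hb hab
      simp only [smul_eq_mul] at hcc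
      simp only [Prod.snd_add, Prod.smul_snd, smul_eq_mul]
      rcases eq_or_lt_of_le ha with ha' | ha'
      · have hb1 : b = 1 := by linarith
        have ha0 : a = 0 := ha'.symm
        nlinarith [hz₂u]
      · have h1 : a * w₁.2 < a * u z₁ := by nlinarith
        have h2 : b * w₂.2 ≤ b * u z₂ := by nlinarith
        linarith
  -- the vertical ray
  set B : Set (ℝ × ℝ) := {w | w.1 = 0 ∧ g0 ≤ w.2} with hB
  have hBconv : Convex ℝ B := by
    rintro w₁ ⟨h11, h12⟩ w₂ ⟨h21, h22⟩ a b ha hb hab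
    constructor
    · simp only [Prod.fst_add, Prod.smul_fst, smul_eq_mul, h11, h21]
      ring
    · simp only [Prod.snd_add, Prod.smul_snd, smul_eq_mul]
      have h1 : a * g0 ≤ a * w₁.2 := mul_le_mul_of_nonneg_left h12 ha
      have h2 : b * g0 ≤ b * w₂.2 := mul_le_mul_of_nonneg_left h22 hb
      have h3 : a * g0 + b * g0 = g0 := by rw [← add_mul, hab, one_mul]
      linarith
  have hdisj : Disjoint A B := by
    rw [Set.disjoint_left]
    rintro w ⟨z, hzK, hzφ, hzu⟩ ⟨hw1, hw2⟩
    have : u z ≤ g0 := hp z hzK (by rw [hzφ, hw1, add_zero])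
    linarith
  obtain ⟨f, r, hfa, hfb⟩ := geometric_hahn_banach_open hAconv hAopen hBconv hdisj
  set α := f (1, 0) with hα
  set β := f (0, 1) with hβ
  have hf : ∀ w : ℝ × ℝ, f w = w.1 * α + w.2 * β := by
    intro w
    have hw : w = w.1 • ((1 : ℝ), (0 : ℝ)) + w.2 • ((0 : ℝ), (1 : ℝ)) := by
      ext <;> simp
    conv_lhs => rw [hw]
    rw [map_add, map_smul, map_smul, smul_eq_mul, smul_eq_mul]
  -- β ≥ 0
  have hβ0 : 0 ≤ β := by
    by_contra h
    push_neg at h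
    set s := max g0 ((r - 1) / β) with hs
    have hsB : ((0 : ℝ), s) ∈ B := ⟨rfl, le_max_left _ _⟩
    have h1 : r ≤ s * β := by simpa [hf] using hfb _ hsB
    have h2 : s * β ≤ r - 1 := (div_le_iff_of_neg h).mp (le_max_right _ _)
    linarith
  -- β ≠ 0
  have hβpos : 0 < β := by
    rcases hβ0.lt_or_eq with h | h
    · exact h
    · exfalso
      have hmemA : ((0 : ℝ), g0 - 1) ∈ A :=
        ⟨(x, q), hxq, by simp [hc], by simp [hg0]⟩
      have h1 : (g0 - 1) * β < r := by simpa [hf] using hfa _ hmemA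
      have h2 : r ≤ g0 * β := by
        simpa [hf] using hfb ((0 : ℝ), g0) ⟨rfl, le_refl _⟩
      rw [← h] at h1 h2
      simp at h1 h2
      linarith
  -- the key bound
  set y : ℝ := -α / β with hy
  have key : ∀ z ∈ K, u z ≤ g0 + y * ((z.1 + ∑ i, z.2 i * p i) - c) := by
    intro z hz
    set T : ℝ := g0 + y * ((z.1 + ∑ i, z.2 i * p i) - c) with hT
    refine le_of_forall_lt fun s hs => ?_
    have hmemA : (((z.1 + ∑ i, z.2 i * p i) - c, s) : ℝ × ℝ) ∈ A :=
      ⟨z, hz, by ring, hs⟩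
    have h1 : ((z.1 + ∑ i, z.2 i * p i) - c) * α + s * β < r := by
      simpa [hf] using hfa _ hmemA
    have h2 : r ≤ g0 * β := by
      simpa [hf] using hfb ((0 : ℝ), g0) ⟨rfl, le_refl _⟩
    have h3 : s * β < T * β := by
      have hTβ : T * β = g0 * β - ((z.1 + ∑ i, z.2 i * p i) - c) * α := by
        rw [hT, hy]
        field_simp
        ring
      rw [hTβ]; linarith
    exact (mul_lt_mul_iff_of_pos_right hβpos).mp h3
  -- positivity of y
  obtain ⟨ε, hε, hball⟩ := Metric.isOpen_iff.mp hK_open (x, q) hxq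
  have hmem : ((x + ε / 2 : ℝ), q) ∈ K := by
    apply hball
    rw [Metric.mem_ball, Prod.dist_eq, dist_self, Real.dist_eq,
      show x + ε / 2 - x = ε / 2 by ring, abs_of_pos (by linarith),
      max_eq_left (by linarith)]
    linarith
  have hypos : 0 < y := by
    have h1 : g0 < u (x + ε / 2, q) := hu_mono x (x + ε / 2) q hxq hmem (by linarith)
    have h2 := key _ hmem
    simp only at h2
    have h3 : ((x + ε / 2 : ℝ), q).1 + ∑ i, ((x + ε / 2 : ℝ), q).2 i * p i - c
        = ε / 2 := by
      simp only [hc]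
      ring
    rw [h3] at h2
    nlinarith
  refine ⟨y, hypos, fun p' hp' => ?_⟩
  have hkey := key p' hp'
  have hsum : ∑ i, (y * p i) * (p'.2 i - q i)
      = y * ((∑ i, p'.2 i * p i) - (∑ i, q i * p i)) := by
    rw [mul_sub, Finset.mul_sum, Finset.mul_sum, ← Finset.sum_sub_distrib]
    exact Finset.sum_congr rfl fun i _ => by ring
  have hexp : y * ((p'.1 + ∑ i, p'.2 i * p i) - c)
      = y * (p'.1 - x) + y * ((∑ i, p'.2 i * p i) - (∑ i, q i * p i)) := by
    rw [hc]; ring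
  linarith
end

section
/- Let L ⊆ ℝⁿ be a nonempty convex set that is relatively open (i.e., L equals its relative interior), and let A ⊆ L be a convex set such that: (i) λa ∈ A for every a ∈ A and every λ ≥ 1; (ii) ⋃_{λ>0} λA = L; and (iii) the origin 0 belongs to the closure of A. Then A = L. -/
open Set

/-- Auxiliary lemma: the full-dimensional case. -/
lemma aux_full {E : Type*} [NormedAddCommGroup E] [NormedSpace ℝ E]
    [FiniteDimensional ℝ E] {A L : Set E}
    (hA : Convex ℝ A) (hspan : Submodule.span ℝ A = ⊤)
    (h0 : (0 : E) ∈ closure A) (hLopen : IsOpen L) (hLA : L ⊆ closure A) :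
    L ⊆ A := by
  have hAne : A.Nonempty := by
    rcases eq_empty_or_nonempty A with rfl | h
    · simp at h0
    · exact h
  -- affine span of A is everything
  have h0span : (0 : E) ∈ affineSpan ℝ A := by
    have hclosed : IsClosed (affineSpan ℝ A : Set E) :=
      (affineSpan ℝ A).closed_of_finiteDimensional
    have : closure A ⊆ (affineSpan ℝ A : Set E) :=
      hclosed.closure_subset_iff.2 (subset_affineSpan ℝ A)
    exact this h0
  have haff : affineSpan ℝ A = ⊤ := by
    rw [← (affineSpan ℝ A).coe_eq_univ_iff]
    have h1 : affineSpan ℝ (insert (0 : E) A) = affineSpan ℝ A :=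
      affineSpan_insert_eq_affineSpan ℝ h0span
    have h2 : (affineSpan ℝ (insert (0 : E) A) : Set E) = Submodule.span ℝ A :=
      affineSpan_insert_zero A
    rw [← h1, h2, hspan]
    rfl
  obtain ⟨y, hy⟩ := (hA.interior_nonempty_iff_affineSpan_eq_top).2 haff
  intro x hx
  obtain ⟨ε, hε, hball⟩ := Metric.isOpen_iff.1 hLopen x hx
  set t : ℝ := ε / (2 * (‖x - y‖ + 1)) with ht_def
  have hnorm_pos : (0 : ℝ) < ‖x - y‖ + 1 := by positivity
  have ht : 0 < t := by positivity
  set z : E := x + t • (x - y) with hz_def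
  have hz_mem : z ∈ closure A := by
    apply hLA
    apply hball
    have hdist : dist z x = t * ‖x - y‖ := by
      rw [dist_eq_norm]
      simp [hz_def, norm_smul, abs_of_pos ht]
    rw [Metric.mem_ball, hdist, ht_def]
    calc ε / (2 * (‖x - y‖ + 1)) * ‖x - y‖
        ≤ ε / (2 * (‖x - y‖ + 1)) * (‖x - y‖ + 1) := by
          apply mul_le_mul_of_nonneg_left (by linarith) (by positivity)
      _ = ε / 2 := by field_simp
      _ < ε := by linarith
  have h1t : (0 : ℝ) < 1 + t := by linarith
  have h1t' : (1 + t) ≠ 0 := ne_of_gt h1t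
  have hcombo : (t / (1 + t)) • y + (1 / (1 + t)) • z = x := by
    rw [hz_def]
    match_scalars <;> field_simp <;> ring
  have : x ∈ interior A := by
    rw [← hcombo]
    exact hA.combo_interior_closure_mem_interior hy hz_mem
      (by positivity) (by positivity) (by field_simp; ring)
  exact interior_subset this

theorem stmt_8
    {n : ℕ} (L A : Set (Fin n → ℝ))
    (hL_convex : Convex ℝ L) (hL_nonempty : L.Nonempty)
    -- `L` is relatively open, i.e., equals its relative interior:
    (hL_relopen : intrinsicInterior ℝ L = L)
    (hAL : A ⊆ L) (hA_convex : Convex ℝ A)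
    -- (i) `λ a ∈ A` for every `a ∈ A` and `λ ≥ 1`:
    (hA_dilate : ∀ a ∈ A, ∀ lam : ℝ, 1 ≤ lam → lam • a ∈ A)
    -- (ii) `⋃_{λ>0} λ A = L`:
    (hA_union : ∀ x, x ∈ L ↔ ∃ lam : ℝ, 0 < lam ∧ ∃ a ∈ A, x = lam • a)
    -- (iii) the origin belongs to the closure of `A`:
    (hA_zero : (0 : Fin n → ℝ) ∈ closure A) :
    A = L := by
  -- Step 1: L ⊆ closure A
  have hLclA : L ⊆ closure A := by
    intro x hx
    obtain ⟨lam, hlam, a, ha, rfl⟩ := (hA_union x).1 hx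
    rcases le_or_gt 1 lam with h1 | h1
    · exact subset_closure (hA_dilate a ha lam h1)
    · have h2 : lam • a + (1 - lam) • (0 : Fin n → ℝ) ∈ closure A :=
        hA_convex.closure (subset_closure ha) hA_zero hlam.le (by linarith) (by ring)
      simpa using h2
  -- The span of L
  set V : Submodule ℝ (Fin n → ℝ) := Submodule.span ℝ L with hV_def
  have hLV : L ⊆ (V : Set (Fin n → ℝ)) := Submodule.subset_span
  have hAV : A ⊆ (V : Set (Fin n → ℝ)) := fun a ha => hLV (hAL ha)
  have hVclosed : IsClosed (V : Set (Fin n → ℝ)) := V.closed_of_finiteDimensional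
  -- span A = span L
  have hspanAL : Submodule.span ℝ A = V := by
    apply le_antisymm
    · exact Submodule.span_mono hAL
    · rw [hV_def]
      apply Submodule.span_le.2
      intro x hx
      obtain ⟨lam, hlam, a, ha, rfl⟩ := (hA_union x).1 hx
      exact Submodule.smul_mem _ _ (Submodule.subset_span ha)
  -- carriers of affineSpan L and V coincide
  have h0clL : (0 : Fin n → ℝ) ∈ closure L :=
    closure_mono hAL hA_zero
  have h0affL : (0 : Fin n → ℝ) ∈ affineSpan ℝ L := by
    have hclosed : IsClosed (affineSpan ℝ L : Set (Fin n → ℝ)) :=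
      (affineSpan ℝ L).closed_of_finiteDimensional
    exact hclosed.closure_subset_iff.2 (subset_affineSpan ℝ L) h0clL
  have haffV : (affineSpan ℝ L : Set (Fin n → ℝ)) = (V : Set (Fin n → ℝ)) := by
    have h1 : affineSpan ℝ (insert (0 : Fin n → ℝ) L) = affineSpan ℝ L :=
      affineSpan_insert_eq_affineSpan ℝ h0affL
    rw [← h1, affineSpan_insert_zero, hV_def]
  -- work inside V
  set A' : Set V := (↑) ⁻¹' A with hA'_def
  set L' : Set V := (↑) ⁻¹' L with hL'_def
  have hcoeA : ((↑) : V → (Fin n → ℝ)) '' A' = A := by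
    rw [hA'_def, Set.image_preimage_eq_inter_range, Subtype.range_coe_subtype]
    exact inter_eq_left.2 fun a ha => hAV ha
  have hA'conv : Convex ℝ A' := hA_convex.linear_preimage V.subtype
  have hspanA' : Submodule.span ℝ A' = ⊤ := by
    apply Submodule.map_injective_of_injective V.injective_subtype
    rw [Submodule.map_span, Submodule.map_subtype_top]
    show Submodule.span ℝ (((↑) : V → (Fin n → ℝ)) '' A') = V
    rw [hcoeA, hspanAL]
  have hind : Topology.IsInducing ((↑) : V → (Fin n → ℝ)) := Topology.IsInducing.subtypeVal
  have hclA' : closure A' = ((↑) : V → (Fin n → ℝ)) ⁻¹' (closure A) := by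
    rw [hind.closure_eq_preimage_closure_image, hcoeA]
  have h0A' : (0 : V) ∈ closure A' := by
    rw [hclA']
    exact hA_zero
  have hL'clA' : L' ⊆ closure A' := by
    intro x hx
    rw [hclA']
    exact hLclA hx
  -- L' is open in V
  have hL'open : IsOpen L' := by
    rw [Metric.isOpen_iff]
    intro x hx
    have hxL : (x : Fin n → ℝ) ∈ L := hx
    rw [← hL_relopen] at hxL
    obtain ⟨y, hy, hyx⟩ := mem_intrinsicInterior.1 hxL
    obtain ⟨ε, hε, hball⟩ := Metric.isOpen_iff.1 isOpen_interior y hy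
    have hLsub : Metric.ball y ε ⊆ ((↑) ⁻¹' L : Set (affineSpan ℝ L)) :=
      fun z hz => interior_subset (hball hz)
    refine ⟨ε, hε, fun z hz => ?_⟩
    -- z : V, dist z x < ε; transfer to affineSpan ℝ L
    have hzaff : (z : Fin n → ℝ) ∈ affineSpan ℝ L := by
      rw [← SetLike.mem_coe, haffV]
      exact z.2
    have : (⟨(z : Fin n → ℝ), hzaff⟩ : affineSpan ℝ L) ∈ Metric.ball y ε := by
      rw [Metric.mem_ball, Subtype.dist_eq]
      simpa [hyx, Subtype.dist_eq] using hz
    exact hLsub this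
  -- apply the auxiliary lemma
  have hmain : L' ⊆ A' := aux_full hA'conv hspanA' h0A' hL'open hL'clA'
  apply Subset.antisymm hAL
  intro x hx
  have : (⟨x, hLV hx⟩ : V) ∈ L' := hx
  exact hmain this
end
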